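/- Let I be an independent set of G containing exactly one vertex of each part P_i. In the graph G' of the partitioned-TJ-to-TJ construction, every (unpartitioned) TJ-step starting from g(I) moves the token on v^b, where {v} = I ∩ P_i for some i, to the vertex δ_i of the same gadget; no other jump from g(I) results in an independent set. -/
import Mathlib


/-- `I` is an independent set of the graph `G`. -/
def IsIndepFinset {α : Type*} (G : SimpleGraph α) (I : Finset α) : Prop :=
  ∀ u ∈ I, ∀ v ∈ I, ¬ G.Adj u v

/-- `D` is a dominating set of the graph `G`. -/
def IsDomFinset {α : Type*} (G : SimpleGraph α) (D : Finset α) : Prop :=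
  ∀ x : α, x ∈ D ∨ ∃ y ∈ D, G.Adj x y

/-- A token-jumping step: some token jumps from `u ∈ I` to `w ∉ I`. -/
def TJStep {α : Type*} [DecidableEq α] (I J : Finset α) : Prop :=
  ∃ u ∈ I, ∃ w, w ∉ I ∧ J = insert w (I.erase u)

/-- A token-sliding step: some token slides from `u ∈ I` along an edge to `w ∉ I`. -/
def TSStep {α : Type*} [DecidableEq α] (G : SimpleGraph α) (I J : Finset α) : Prop :=
  ∃ u ∈ I, ∃ w, w ∉ I ∧ G.Adj u w ∧ J = insert w (I.erase u)

/-- A partitioned token-jumping step with respect to token sets `Q`. -/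
def PTJStep {α : Type*} {ι : Type*} [DecidableEq α] (Q : ι → Set α) (I J : Finset α) : Prop :=
  ∃ u ∈ I, ∃ w, w ∉ I ∧ (∃ i, u ∈ Q i ∧ w ∈ Q i) ∧ J = insert w (I.erase u)

/-- A partitioned token-sliding step with respect to token sets `Q`. -/
def PTSStep {α : Type*} {ι : Type*} [DecidableEq α] (G : SimpleGraph α) (Q : ι → Set α)
    (I J : Finset α) : Prop :=
  ∃ u ∈ I, ∃ w, w ∉ I ∧ G.Adj u w ∧ (∃ i, u ∈ Q i ∧ w ∈ Q i) ∧ J = insert w (I.erase u)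

/-- There is a reconfiguration sequence `A = f 0, f 1, …, f ℓ = B` of length `ℓ`, all of whose
members satisfy `Valid`, with consecutive members related by `Step`. -/
def AdmitsSeq {α : Type*} (Valid : Finset α → Prop) (Step : Finset α → Finset α → Prop)
    (A B : Finset α) (ℓ : ℕ) : Prop :=
  ∃ f : ℕ → Finset α, f 0 = A ∧ f ℓ = B ∧ (∀ i, i ≤ ℓ → Valid (f i)) ∧
    ∀ i, i < ℓ → Step (f i) (f (i + 1))

/-- Vertices of the graph `G'` of the partitioned-TJ-to-TJ construction. -/
inductive GVthree (V : Type*) (k : ℕ) : Type _ where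
  | a : V → GVthree V k
  | b : V → GVthree V k
  | de : Fin k → GVthree V k
deriving DecidableEq

/-- The edges of `G'`. -/
def relThree {V : Type*} (G : SimpleGraph V) {k : ℕ} (P : Fin k → Finset V) :
    GVthree V k → GVthree V k → Prop
  | .a v, .a w => (∃ i, v ∈ P i ∧ w ∈ P i) ∨ G.Adj v w
  | .b v, .b w => ∃ i, v ∈ P i ∧ w ∈ P i
  | .a v, .b w => v ≠ w ∧ ∃ i, v ∈ P i ∧ w ∈ P i
  | .de i, .b v => v ∈ P i
  | .de _, .de _ => True
  | _, _ => False

/-- The graph `G'` of the partitioned-TJ-to-TJ construction. -/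
def GpThree {V : Type*} (G : SimpleGraph V) {k : ℕ} (P : Fin k → Finset V) :
    SimpleGraph (GVthree V k) :=
  SimpleGraph.fromRel (relThree G P)

/-- The map `g` sending an independent set `I` of `G` (with one vertex per part) to
`{v^a : v ∈ I} ∪ {v^b : v ∈ I}`. -/
def gThree {V : Type*} [DecidableEq V] {k : ℕ} (I : Finset V) : Finset (GVthree V k) :=
  I.image GVthree.a ∪ I.image GVthree.b

/-- every (unpartitioned) TJ-step between independent sets starting from `g(I)`
moves the token on `v^b`, where `v` is the unique vertex of `I ∩ P_i` for some `i`, to the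
vertex `δ_i` of the same gadget; no other jump from `g(I)` results in an independent set. -/
theorem stmt13 {V : Type*} [Fintype V] [DecidableEq V] (G : SimpleGraph V) (k : ℕ)
    (P : Fin k → Finset V) (hP : ∀ v : V, ∃! i, v ∈ P i)
    (I : Finset V) (hI : IsIndepFinset G I) (hone : ∀ i, ∃! v, v ∈ I ∧ v ∈ P i)
    (J : Finset (GVthree V k))
    (hstep : TJStep (gThree I) J)
    (hJ : IsIndepFinset (GpThree G P) J) :
    ∃ (i : Fin k) (v : V), v ∈ I ∧ v ∈ P i ∧
      J = insert (GVthree.de i) ((gThree (k := k) I).erase (GVthree.b v)) := by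

  classical
  obtain ⟨u, hu, w, hw, hJdef⟩ := hstep
  have hmemJ : ∀ y, y ∈ gThree (k := k) I → y ≠ u → y ∈ J := by
    intro y hy hne
    rw [hJdef]
    exact Finset.mem_insert_of_mem (Finset.mem_erase.mpr ⟨hne, hy⟩)
  have hwJ : w ∈ J := by rw [hJdef]; exact Finset.mem_insert_self _ _
  have haI : ∀ v : V, v ∈ I → GVthree.a v ∈ gThree (k := k) I := by
    intro v hv; exact Finset.mem_union_left _ (Finset.mem_image_of_mem _ hv)
  have hbI : ∀ v : V, v ∈ I → GVthree.b v ∈ gThree (k := k) I := by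
    intro v hv; exact Finset.mem_union_right _ (Finset.mem_image_of_mem _ hv)
  cases w with
  | a x =>
    exfalso
    have hx : x ∉ I := fun h => hw (haI x h)
    obtain ⟨i, hxi⟩ := (hP x).exists
    obtain ⟨v, ⟨hvI, hvP⟩, _⟩ := hone i
    have hvx : x ≠ v := fun h => hx (h ▸ hvI)
    by_cases hcase : u = GVthree.a v
    · have hbvJ : GVthree.b v ∈ J := hmemJ _ (hbI v hvI) (by simp [hcase])
      exact hJ _ hwJ _ hbvJ (by
        simp only [GpThree, SimpleGraph.fromRel_adj, relThree]
        exact ⟨by simp, Or.inl ⟨hvx, ⟨i, hxi, hvP⟩⟩⟩)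
    · have havJ : GVthree.a v ∈ J := hmemJ _ (haI v hvI) (by
        intro h; exact hcase h.symm)
      exact hJ _ hwJ _ havJ (by
        simp only [GpThree, SimpleGraph.fromRel_adj, relThree]
        exact ⟨by simp [hvx], Or.inl (Or.inl ⟨i, hxi, hvP⟩)⟩)
  | b x =>
    exfalso
    have hx : x ∉ I := fun h => hw (hbI x h)
    obtain ⟨i, hxi⟩ := (hP x).exists
    obtain ⟨v, ⟨hvI, hvP⟩, _⟩ := hone i
    have hvx : x ≠ v := fun h => hx (h ▸ hvI)
    by_cases hcase : u = GVthree.b v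
    · have havJ : GVthree.a v ∈ J := hmemJ _ (haI v hvI) (by simp [hcase])
      exact hJ _ hwJ _ havJ (by
        simp only [GpThree, SimpleGraph.fromRel_adj, relThree]
        exact ⟨by simp, Or.inr ⟨hvx.symm, ⟨i, hvP, hxi⟩⟩⟩)
    · have hbvJ : GVthree.b v ∈ J := hmemJ _ (hbI v hvI) (by
        intro h; exact hcase h.symm)
      exact hJ _ hwJ _ hbvJ (by
        simp only [GpThree, SimpleGraph.fromRel_adj, relThree]
        exact ⟨by simp [hvx], Or.inl ⟨i, hxi, hvP⟩⟩)
  | de i =>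
    obtain ⟨v, ⟨hvI, hvP⟩, _⟩ := hone i
    have hcase : u = GVthree.b v := by
      by_contra hne
      have hbvJ : GVthree.b v ∈ J := hmemJ _ (hbI v hvI) (fun h => hne h.symm)
      exact hJ _ hwJ _ hbvJ (by
        simp only [GpThree, SimpleGraph.fromRel_adj, relThree]
        exact ⟨by simp, Or.inl hvP⟩)
    exact ⟨i, v, hvI, hvP, by rw [hJdef, hcase]⟩
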